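/- Let G be a topological group acting continuously on a topological space X, and acting continuously and freely on a space P such that τ : P → B = P/G is a locally trivial principal G-bundle. Let r ≥ 2 and assume the orbit space (X^r × P)/G of the diagonal G-action is a normal space. Let ρ_r ×_G 1 : (C([0,1],X) × P)/G → (X^r × P)/G denote the continuous map induced on the orbit spaces of the diagonal G-actions by ρ_r × id_P. Then TC^w_{r,G}(X;P) ≤ secat[ρ_r ×_G 1] ≤ secat[τ : P → B] + TC^w_{r,G}(X;P). (Under the canonical identifications E^I_B ≅ (C([0,1],X) × P)/G and E^r_B ≅ (X^r × P)/G for the associated bundle p : E = X ×_G P → B, the middle term is the sequential parametrized topological complexity TC_r[p : E → B], and secat[τ] equals G-cat[p : E → B].) -/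

import Mathlib

open scoped unitInterval

/-- The sectional category of a continuous map `p : E → B`. -/
noncomputable def secat {E B : Type*} [TopologicalSpace E] [TopologicalSpace B]
    (p : C(E, B)) : ℕ∞ :=
  sInf {n : ℕ∞ | ∃ m : ℕ, n = m ∧ ∃ U : Fin (m + 1) → Set B,
    (∀ i, IsOpen (U i)) ∧ (⋃ i, U i) = Set.univ ∧
    ∀ i, ∃ s : C((U i : Set B), E), ∀ x, p (s x) = (x : B)}

/-- The relative sectional category `secat_f[p : E → B]` for `f : B → C`. -/
noncomputable def secatf {E B C : Type*} [TopologicalSpace E] [TopologicalSpace B]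
    [TopologicalSpace C] (p : C(E, B)) (f : C(B, C)) : ℕ∞ :=
  sInf {n : ℕ∞ | ∃ m : ℕ, n = m ∧ ∃ U : Fin (m + 1) → Set C,
    (∀ i, IsOpen (U i)) ∧ Set.range f ⊆ (⋃ i, U i) ∧
    ∀ i, ∃ s : C((⇑f ⁻¹' U i : Set B), E), ∀ x, p (s x) = (x : B)}

/-- The evaluation map `ρ_r : C([0,1], X) → X^r`, `γ ↦ (γ (t 0), …, γ (t (r-1)))`. -/
noncomputable def pathEval (X : Type*) [TopologicalSpace X] {r : ℕ}
    (t : Fin r → unitInterval) : C(C(unitInterval, X), Fin r → X) :=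
  ⟨fun γ i => γ (t i), continuous_pi fun i => ContinuousEvalConst.continuous_eval_const (t i)⟩

/-- The orbit quotient map `X → X/G` as a continuous map. -/
noncomputable def orbitQuotMap (G X : Type*) [Group G] [MulAction G X]
    [TopologicalSpace X] : C(X, Quotient (MulAction.orbitRel G X)) :=
  ⟨Quotient.mk _, continuous_quotient_mk'⟩

/-- The continuous map induced on orbit spaces by a `G`-equivariant continuous map. -/
noncomputable def inducedQuotMap {G A B : Type*} [Group G] [TopologicalSpace A]
    [TopologicalSpace B] [MulAction G A] [MulAction G B]
    (F : C(A, B)) (hF : ∀ (g : G) (a : A), F (g • a) = g • F a) :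
    C(Quotient (MulAction.orbitRel G A), Quotient (MulAction.orbitRel G B)) :=
  ⟨Quotient.map' F (fun a b hab => by
      obtain ⟨g, hg⟩ := MulAction.mem_orbit_iff.mp (MulAction.orbitRel_apply.mp hab)
      exact MulAction.orbitRel_apply.mpr
        (MulAction.mem_orbit_iff.mpr ⟨g, by rw [← hg, hF]⟩)),
    F.continuous.quotient_map' _⟩

/-!
Local triviality of `τ : P → P/G` makes the action on `P` free and gives a continuous map
`(p, q) ↦ g` with `g • p = q` on pairs of points in the same orbit. Hence a class
`c ∈ (Y × P)/G` together with a point `a ∈ P` lying over the image of `c` in `P/G` determines,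
continuously, the unique representative of `c` with `P`-coordinate `a`.

For the first inequality, a section `s` of `F ×_G 1` over `U` yields the section
`z ↦ (representative of s [z] with P-coordinate z.2)` of `F × id` over `Q⁻¹ U`. For the second,
a section of `τ` over `V` yields a section of `Q` over the preimage of `V`; composing it with a
section of `F × id` over `Q⁻¹ U` and projecting gives a section of `F ×_G 1` over the
intersection. In a normal space, covers by `k + 1` and `n + 1` open sets whose pairwise
intersections carry sections can be recombined into a cover by `k + n + 1` such sets.
-/

open Topology Function

section Sections

variable {E B : Type*} [TopologicalSpace E] [TopologicalSpace B]

def HasSectionOn (p : C(E, B)) (U : Set B) : Prop :=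
  ∃ s : C(U, E), ∀ x, p (s x) = x

theorem HasSectionOn.mono {p : C(E, B)} {U V : Set B} (h : HasSectionOn p U) (hVU : V ⊆ U) :
    HasSectionOn p V := by
  obtain ⟨s, hs⟩ := h
  exact ⟨s.comp ⟨Set.inclusion hVU, continuous_inclusion hVU⟩, fun x => hs _⟩

theorem hasSectionOn_iUnion_of_pairwise_disjoint {p : C(E, B)} {ι : Type*} {V : ι → Set B}
    (hV : ∀ i, IsOpen (V i)) (hd : Pairwise (Disjoint on V)) (h : ∀ i, HasSectionOn p (V i)) :
    HasSectionOn p (⋃ i, V i) := by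
  choose s hs using h
  have hmem (x : ↥(⋃ i, V i)) : ∃ i, (x : B) ∈ V i := Set.mem_iUnion.mp x.2
  refine ⟨ContinuousMap.liftCover (fun i => Subtype.val ⁻¹' V i)
      (fun i => (s i).comp ⟨fun x => ⟨x.1.1, x.2⟩, by fun_prop⟩) ?_ ?_, fun x => ?_⟩
  · intro i j x hi hj
    obtain rfl : i = j := hd.eq (Set.not_disjoint_iff.mpr ⟨x, hi, hj⟩)
    rfl
  · intro x
    obtain ⟨i, hi⟩ := hmem x
    exact ⟨i, ((hV i).preimage continuous_subtype_val).mem_nhds hi⟩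
  · obtain ⟨i, hi⟩ := hmem x
    rw [ContinuousMap.liftCover_coe (i := i) ⟨x, hi⟩]
    exact hs i _

theorem ENat.sInf_mem_of_ne_top {s : Set ℕ∞} (h : sInf s ≠ ⊤) : sInf s ∈ s :=
  csInf_mem (Set.nonempty_iff_ne_empty.mpr fun hs => h (hs ▸ sInf_empty))

theorem secat_le_of_cover (p : C(E, B)) {m : ℕ} (U : Fin (m + 1) → Set B)
    (hU : ∀ i, IsOpen (U i)) (hcov : ⋃ i, U i = Set.univ) (hs : ∀ i, HasSectionOn p (U i)) :
    secat p ≤ m :=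
  sInf_le ⟨m, rfl, U, hU, hcov, hs⟩

theorem exists_cover_of_secat_ne_top {p : C(E, B)} (h : secat p ≠ ⊤) :
    ∃ m : ℕ, secat p = m ∧ ∃ U : Fin (m + 1) → Set B, (∀ i, IsOpen (U i)) ∧
      ⋃ i, U i = Set.univ ∧ ∀ i, HasSectionOn p (U i) :=
  ENat.sInf_mem_of_ne_top h

theorem exists_cover_of_secatf_ne_top {C : Type*} [TopologicalSpace C] {p : C(E, B)}
    {f : C(B, C)} (h : secatf p f ≠ ⊤) :
    ∃ m : ℕ, secatf p f = m ∧ ∃ U : Fin (m + 1) → Set C, (∀ i, IsOpen (U i)) ∧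
      Set.range f ⊆ ⋃ i, U i ∧ ∀ i, HasSectionOn p (f ⁻¹' U i) :=
  ENat.sInf_mem_of_ne_top h

end Sections

theorem Finite.exists_last_max {α β : Type*} [Finite α] [Nonempty α] [LinearOrder α]
    [LinearOrder β] (v : α → β) : ∃ i, (∀ a, v a ≤ v i) ∧ ∀ a, i < a → v a < v i := by
  obtain ⟨i, hi⟩ := Finite.exists_max fun a => toLex (v a, a)
  exact ⟨i, fun a => (Prod.Lex.le_iff.mp (hi a)).elim le_of_lt fun h => h.1.le,
    fun a hia => (Prod.Lex.le_iff.mp (hi a)).resolve_right fun h => not_le.mpr hia h.2⟩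

theorem exists_antidiagonal_refinement {B : Type*} [TopologicalSpace B] [NormalSpace B]
    {k n : ℕ} (A : Fin (k + 1) → Set B) (hA : ∀ i, IsOpen (A i)) (hAcov : ⋃ i, A i = Set.univ)
    (C : Fin (n + 1) → Set B) (hC : ∀ j, IsOpen (C j)) (hCcov : ⋃ j, C j = Set.univ) :
    ∃ V : Fin (k + 1) × Fin (n + 1) → Set B, (∀ p, IsOpen (V p)) ∧
      (∀ p, V p ⊆ A p.1 ∩ C p.2) ∧ (∀ x, ∃ p, x ∈ V p) ∧
      ∀ p q, p ≠ q → (p.1 : ℕ) + p.2 = q.1 + q.2 → Disjoint (V p) (V q) := by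
  obtain ⟨f, hf⟩ := PartitionOfUnity.exists_isSubordinate_of_locallyFinite isClosed_univ A hA
    (locallyFinite_of_finite A) hAcov.ge
  obtain ⟨g, hg⟩ := PartitionOfUnity.exists_isSubordinate_of_locallyFinite isClosed_univ C hC
    (locallyFinite_of_finite C) hCcov.ge
  let h (p : Fin (k + 1) × Fin (n + 1)) : C(B, ℝ) := f p.1 * g p.2
  let rivals (p : Fin (k + 1) × Fin (n + 1)) : Set (Fin (k + 1) × Fin (n + 1)) :=
    {q | q ≠ p ∧ (q.1 : ℕ) + q.2 = p.1 + p.2}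
  -- on each antidiagonal `i + j = m`, `V (i, j)` is where `f i * g j` strictly wins
  refine ⟨fun p => {x | 0 < h p x} ∩ ⋂ q ∈ rivals p, {x | h q x < h p x}, fun p => ?_,
    fun p x hx => ?_, fun x => ?_, fun p q hpq hsum => ?_⟩
  · exact (isOpen_lt continuous_const (h p).continuous).inter
      ((rivals p).toFinite.isOpen_biInter fun q _ => isOpen_lt (h q).continuous (h p).continuous)
  · have hfg : 0 < f p.1 x * g p.2 x := hx.1
    exact ⟨hf p.1 (subset_tsupport _ (pos_of_mul_pos_left hfg (g.nonneg _ x)).ne'),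
      hg p.2 (subset_tsupport _ (pos_of_mul_pos_right hfg (f.nonneg _ x)).ne')⟩
  · obtain ⟨i, hi, hi'⟩ := Finite.exists_last_max fun i => f i x
    obtain ⟨j, hj, hj'⟩ := Finite.exists_last_max fun j => g j x
    obtain ⟨i₀, hi₀⟩ := f.exists_pos (Set.mem_univ x)
    obtain ⟨j₀, hj₀⟩ := g.exists_pos (Set.mem_univ x)
    have hfi : 0 < f i x := hi₀.trans_le (hi i₀)
    have hgj : 0 < g j x := hj₀.trans_le (hj j₀)
    refine ⟨(i, j), mul_pos hfi hgj, Set.mem_iInter₂.mpr fun ⟨a, b⟩ ⟨hne, hab⟩ => ?_⟩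
    show f a x * g b x < f i x * g j x
    replace hab : (a : ℕ) + b = i + j := hab
    rcases lt_trichotomy (a : ℕ) i with ha | ha | ha
    · calc f a x * g b x ≤ f i x * g b x := mul_le_mul_of_nonneg_right (hi a) (g.nonneg b x)
        _ < f i x * g j x := mul_lt_mul_of_pos_left (hj' b (show (j : ℕ) < b by omega)) hfi
    · exact absurd (Prod.ext (Fin.ext ha) (Fin.ext (show (b : ℕ) = j by omega))) hne
    · calc f a x * g b x ≤ f a x * g j x := mul_le_mul_of_nonneg_left (hj b) (f.nonneg a x)
        _ < f i x * g j x := mul_lt_mul_of_pos_right (hi' a ha) hgj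
  · refine Set.disjoint_left.mpr fun x hxp hxq => ?_
    have hqp : h q x < h p x := Set.mem_iInter₂.mp hxp.2 q ⟨hpq.symm, hsum.symm⟩
    exact lt_asymm hqp (Set.mem_iInter₂.mp hxq.2 p ⟨hpq, hsum⟩)

theorem secat_le_add_of_inter_covers {E B : Type*} [TopologicalSpace E] [TopologicalSpace B]
    [NormalSpace B] (p : C(E, B)) {k n : ℕ} (A : Fin (k + 1) → Set B) (hA : ∀ i, IsOpen (A i))
    (hAcov : ⋃ i, A i = Set.univ) (C : Fin (n + 1) → Set B) (hC : ∀ j, IsOpen (C j))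
    (hCcov : ⋃ j, C j = Set.univ) (hs : ∀ i j, HasSectionOn p (A i ∩ C j)) :
    secat p ≤ k + n := by
  obtain ⟨V, hVo, hVsub, hVcov, hVdisj⟩ := exists_antidiagonal_refinement A hA hAcov C hC hCcov
  let W (m : Fin (k + n + 1)) : Set B :=
    ⋃ q : {q : Fin (k + 1) × Fin (n + 1) // (q.1 : ℕ) + q.2 = m}, V q
  have hWcov : ⋃ m, W m = Set.univ := by
    refine Set.eq_univ_of_forall fun x => ?_
    obtain ⟨q, hq⟩ := hVcov x
    exact Set.mem_iUnion.mpr ⟨⟨q.1 + q.2, by omega⟩, Set.mem_iUnion.mpr ⟨⟨q, rfl⟩, hq⟩⟩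
  have hWs (m : Fin (k + n + 1)) : HasSectionOn p (W m) :=
    hasSectionOn_iUnion_of_pairwise_disjoint (fun q => hVo q)
      (fun q q' hne => hVdisj q q' (Subtype.coe_injective.ne hne) (q.2.trans q'.2.symm))
      fun q => (hs q.1.1 q.1.2).mono (hVsub q)
  exact_mod_cast secat_le_of_cover p W (fun m => isOpen_iUnion fun q => hVo q) hWcov hWs

theorem IsOpenQuotientMap.exists_lift_restrictPreimage {Y Z T : Type*} [TopologicalSpace Y]
    [TopologicalSpace Z] [TopologicalSpace T] {π : Y → Z} (hπ : IsOpenQuotientMap π)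
    (W : Set Z) (F : C(π ⁻¹' W, T)) (hF : ∀ y y' : π ⁻¹' W, π y = π y' → F y = F y') :
    ∃ Fb : C(W, T), ∀ y, Fb (W.restrictPreimage π y) = F y := by
  let πW : C(π ⁻¹' W, W) := ⟨W.restrictPreimage π, (hπ.restrictPreimage W).continuous⟩
  have hπW : IsQuotientMap πW := (hπ.restrictPreimage W).isQuotientMap
  have hFπW : FactorsThrough F πW := fun y y' h => hF y y' (congrArg Subtype.val h)
  exact ⟨hπW.lift F hFπW, DFunLike.congr_fun (hπW.lift_comp F hFπW)⟩

theorem orbitQuotMap_eq_iff {G Y : Type*} [Group G] [MulAction G Y] [TopologicalSpace Y]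
    {y y' : Y} : orbitQuotMap G Y y = orbitQuotMap G Y y' ↔ ∃ g : G, g • y' = y :=
  Quotient.eq.trans (MulAction.orbitRel_apply.trans MulAction.mem_orbit_iff)

section PrincipalBundle

variable {G P : Type*} [Group G] [TopologicalSpace G] [TopologicalSpace P] [MulAction G P]

variable (G P) in
def IsLocallyTrivialPrincipal : Prop :=
  ∀ b : Quotient (MulAction.orbitRel G P),
    ∃ U : Set (Quotient (MulAction.orbitRel G P)), IsOpen U ∧ b ∈ U ∧
      ∃ φ : (↥U × G) ≃ₜ ↥(⇑(orbitQuotMap G P) ⁻¹' U),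
        (∀ (u : ↥U) (g : G), orbitQuotMap G P ((φ (u, g) : P)) = (u : _)) ∧
        ∀ (u : ↥U) (g g' : G), ((φ (u, g' * g) : P)) = g' • ((φ (u, g) : P))

theorem trivialization_smul_eq {U : Set (Quotient (MulAction.orbitRel G P))}
    (φ : (↥U × G) ≃ₜ ↥(⇑(orbitQuotMap G P) ⁻¹' U))
    (hφτ : ∀ (u : ↥U) (g : G), orbitQuotMap G P ((φ (u, g) : P)) = (u : _))
    (hφ : ∀ (u : ↥U) (g g' : G), ((φ (u, g' * g) : P)) = g' • ((φ (u, g) : P)))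
    {p q : ↥(⇑(orbitQuotMap G P) ⁻¹' U)} (hpq : orbitQuotMap G P p = orbitQuotMap G P q) :
    ((φ.symm q).2 * (φ.symm p).2⁻¹) • (p : P) = q := by
  set a := φ.symm p
  set b := φ.symm q
  have hab : a.1 = b.1 := by
    apply Subtype.ext
    rw [← hφτ a.1 a.2, ← hφτ b.1 b.2, Prod.mk.eta, Prod.mk.eta, φ.apply_symm_apply,
      φ.apply_symm_apply]
    exact hpq
  calc ((b.2 * a.2⁻¹) • (p : P)) = φ (a.1, b.2 * a.2⁻¹ * a.2) := by
        rw [hφ, Prod.mk.eta, φ.apply_symm_apply]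
    _ = q := by rw [inv_mul_cancel_right, hab, Prod.mk.eta, φ.apply_symm_apply]

namespace IsLocallyTrivialPrincipal

theorem eq_one_of_smul_eq (h : IsLocallyTrivialPrincipal G P) {g : G} {x : P}
    (hx : g • x = x) : g = 1 := by
  obtain ⟨U, -, hxU, φ, -, hφ⟩ := h (orbitQuotMap G P x)
  set a := φ.symm ⟨x, hxU⟩
  have hφa : φ (a.1, g * a.2) = φ (a.1, a.2) := by
    apply Subtype.ext
    rw [hφ, Prod.mk.eta, φ.apply_symm_apply]
    exact hx
  simpa using congrArg Prod.snd (φ.injective hφa)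

theorem smul_left_cancel (h : IsLocallyTrivialPrincipal G P) {g g' : G} {x : P}
    (hx : g • x = g' • x) : g = g' := by
  have hfix : (g'⁻¹ * g) • x = x := by rw [mul_smul, hx, inv_smul_smul]
  exact (inv_mul_eq_one.mp (h.eq_one_of_smul_eq hfix)).symm

theorem exists_continuous_translation [IsTopologicalGroup G]
    (h : IsLocallyTrivialPrincipal G P) :
    ∃ δ : {pq : P × P // orbitQuotMap G P pq.1 = orbitQuotMap G P pq.2} → G,
      Continuous δ ∧ ∀ pq, δ pq • pq.1.1 = pq.1.2 := by
  choose δ hδ using fun pq : {pq : P × P // orbitQuotMap G P pq.1 = orbitQuotMap G P pq.2} =>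
    orbitQuotMap_eq_iff.mp pq.2.symm
  refine ⟨δ, continuous_iff_continuousAt.mpr fun pq₀ => ?_, hδ⟩
  obtain ⟨U, hUo, hU, φ, hφτ, hφ⟩ := h (orbitQuotMap G P pq₀.1.1)
  let N : Set {pq : P × P // orbitQuotMap G P pq.1 = orbitQuotMap G P pq.2} :=
    {pq | orbitQuotMap G P pq.1.1 ∈ U}
  have hN : N ∈ 𝓝 pq₀ := (hUo.preimage (by fun_prop)).mem_nhds hU
  have hmem₂ (pq : N) : orbitQuotMap G P pq.1.1.2 ∈ U := pq.1.2 ▸ pq.2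
  have hδN : N.domRestrict δ = fun pq =>
      (φ.symm ⟨pq.1.1.2, hmem₂ pq⟩).2 * (φ.symm ⟨pq.1.1.1, pq.2⟩).2⁻¹ := by
    funext pq
    refine h.smul_left_cancel (x := pq.1.1.1) ?_
    rw [Set.domRestrict_apply, hδ]
    exact (trivialization_smul_eq φ hφτ hφ (p := ⟨_, pq.2⟩) (q := ⟨_, hmem₂ pq⟩) pq.1.2).symm
  refine (continuousOn_iff_continuous_domRestrict.mpr ?_).continuousAt hN
  rw [hδN]
  fun_prop

end IsLocallyTrivialPrincipal

end PrincipalBundle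

section OrbitProjection

variable {G Y P : Type*} [Group G] [TopologicalSpace Y] [MulAction G Y] [TopologicalSpace P]
  [MulAction G P]

variable (G Y P) in
noncomputable def orbitQuotSnd :
    C(Quotient (MulAction.orbitRel G (Y × P)), Quotient (MulAction.orbitRel G P)) :=
  inducedQuotMap ContinuousMap.snd fun _ _ => rfl

theorem orbitQuotSnd_inducedQuotMap_prodMap {Z : Type*} [TopologicalSpace Z] [MulAction G Z]
    (F : C(Y, Z)) (hF : ∀ (g : G) (y : Y × P),
      F.prodMap (ContinuousMap.id P) (g • y) = g • F.prodMap (ContinuousMap.id P) y)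
    (c : Quotient (MulAction.orbitRel G (Y × P))) :
    orbitQuotSnd G Z P (inducedQuotMap (F.prodMap (ContinuousMap.id P)) hF c) =
      orbitQuotSnd G Y P c :=
  Quotient.inductionOn c fun _ => rfl

variable [TopologicalSpace G]

theorem IsLocallyTrivialPrincipal.eq_of_orbitQuotMap_eq_of_snd_eq
    (h : IsLocallyTrivialPrincipal G P) {z z' : Y × P}
    (horb : orbitQuotMap G (Y × P) z = orbitQuotMap G (Y × P) z') (hsnd : z.2 = z'.2) :
    z = z' := by
  obtain ⟨g, rfl⟩ := orbitQuotMap_eq_iff.mp horb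
  rw [h.eq_one_of_smul_eq hsnd, one_smul]

variable [IsTopologicalGroup G] [ContinuousSMul G Y] [ContinuousSMul G P]

theorem IsLocallyTrivialPrincipal.exists_continuous_rep (h : IsLocallyTrivialPrincipal G P) :
    ∃ Φ : C({ca : Quotient (MulAction.orbitRel G (Y × P)) × P |
        orbitQuotSnd G Y P ca.1 = orbitQuotMap G P ca.2}, Y × P),
      ∀ ca, orbitQuotMap G (Y × P) (Φ ca) = ca.1.1 ∧ (Φ ca).2 = ca.1.2 := by
  obtain ⟨δ, hδc, hδ⟩ := h.exists_continuous_translation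
  let π := Prod.map (orbitQuotMap G (Y × P)) (id : P → P)
  have hπ : IsOpenQuotientMap π := MulAction.isOpenQuotientMap_quotientMk.prodMap .id
  let W : Set (Quotient (MulAction.orbitRel G (Y × P)) × P) :=
    {ca | orbitQuotSnd G Y P ca.1 = orbitQuotMap G P ca.2}
  let F : C(π ⁻¹' W, Y × P) :=
    ⟨fun ya => δ ⟨(ya.1.1.2, ya.1.2), ya.2⟩ • ya.1.1,
      (hδc.comp (by fun_prop)).smul (by fun_prop)⟩
  have hF_orbit (ya : π ⁻¹' W) :
      orbitQuotMap G (Y × P) (F ya) = orbitQuotMap G (Y × P) ya.1.1 :=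
    orbitQuotMap_eq_iff.mpr ⟨_, rfl⟩
  have hF_snd (ya : π ⁻¹' W) : (F ya).2 = ya.1.2 := hδ _
  have hF (ya ya' : π ⁻¹' W) (hππ : π ya = π ya') : F ya = F ya' :=
    h.eq_of_orbitQuotMap_eq_of_snd_eq
      (by rw [hF_orbit, hF_orbit]; exact (Prod.ext_iff.mp hππ).1)
      (by rw [hF_snd, hF_snd]; exact (Prod.ext_iff.mp hππ).2)
  obtain ⟨Φ, hΦ⟩ := hπ.exists_lift_restrictPreimage W F hF
  refine ⟨Φ, fun ca => ?_⟩
  obtain ⟨ya, rfl⟩ := (hπ.restrictPreimage W).surjective ca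
  rw [hΦ]
  exact ⟨hF_orbit ya, hF_snd ya⟩

theorem IsLocallyTrivialPrincipal.hasSectionOn_orbitQuotMap_prod
    (h : IsLocallyTrivialPrincipal G P) {V : Set (Quotient (MulAction.orbitRel G P))}
    (hV : HasSectionOn (orbitQuotMap G P) V) :
    HasSectionOn (orbitQuotMap G (Y × P)) (orbitQuotSnd G Y P ⁻¹' V) := by
  obtain ⟨s, hs⟩ := hV
  obtain ⟨Φ, hΦ⟩ := h.exists_continuous_rep (Y := Y)
  let sY (c : orbitQuotSnd G Y P ⁻¹' V) : P := s ⟨orbitQuotSnd G Y P c, c.2⟩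
  have hsY : Continuous sY := s.continuous.comp (by fun_prop)
  refine ⟨⟨fun c => Φ ⟨(c, sY c), (hs ⟨orbitQuotSnd G Y P c, c.2⟩).symm⟩, ?_⟩,
    fun c => (hΦ _).1⟩
  exact Φ.continuous.comp ((continuous_subtype_val.prodMk hsY).subtype_mk _)

theorem IsLocallyTrivialPrincipal.hasSectionOn_preimage_of_inducedQuotMap
    (h : IsLocallyTrivialPrincipal G P) {Z : Type*} [TopologicalSpace Z] [MulAction G Z]
    (F : C(Y, Z)) (hF : ∀ (g : G) (y : Y × P),
      F.prodMap (ContinuousMap.id P) (g • y) = g • F.prodMap (ContinuousMap.id P) y)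
    {U : Set (Quotient (MulAction.orbitRel G (Z × P)))}
    (hU : HasSectionOn (inducedQuotMap (F.prodMap (ContinuousMap.id P)) hF) U) :
    HasSectionOn (F.prodMap (ContinuousMap.id P)) (orbitQuotMap G (Z × P) ⁻¹' U) := by
  obtain ⟨s, hs⟩ := hU
  obtain ⟨Φ, hΦ⟩ := h.exists_continuous_rep (Y := Y)
  let sU (z : orbitQuotMap G (Z × P) ⁻¹' U) : Quotient (MulAction.orbitRel G (Y × P)) :=
    s ⟨orbitQuotMap G (Z × P) z, z.2⟩
  have hsU : Continuous sU := s.continuous.comp (by fun_prop)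
  have hsU_snd (z : orbitQuotMap G (Z × P) ⁻¹' U) :
      orbitQuotSnd G Y P (sU z) = orbitQuotMap G P z.1.2 := by
    rw [← orbitQuotSnd_inducedQuotMap_prodMap F hF, hs]
    rfl
  refine ⟨⟨fun z => Φ ⟨(sU z, z.1.2), hsU_snd z⟩, ?_⟩, fun z => ?_⟩
  · exact Φ.continuous.comp ((hsU.prodMk (by fun_prop)).subtype_mk _)
  · obtain ⟨hΦ_orbit, hΦ_snd⟩ := hΦ ⟨(sU z, z.1.2), hsU_snd z⟩
    refine h.eq_of_orbitQuotMap_eq_of_snd_eq ?_ hΦ_snd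
    change inducedQuotMap _ hF (orbitQuotMap G (Y × P) (Φ ⟨(sU z, z.1.2), hsU_snd z⟩)) = _
    rw [hΦ_orbit]
    exact hs _

end OrbitProjection

theorem hasSectionOn_inducedQuotMap_inter {G A C : Type*} [Group G] [TopologicalSpace A]
    [TopologicalSpace C] [MulAction G A] [MulAction G C] (Ψ : C(A, C))
    (hΨ : ∀ (g : G) (a : A), Ψ (g • a) = g • Ψ a) {W U : Set (Quotient (MulAction.orbitRel G C))}
    (hW : HasSectionOn (orbitQuotMap G C) W) (hU : HasSectionOn Ψ (orbitQuotMap G C ⁻¹' U)) :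
    HasSectionOn (inducedQuotMap Ψ hΨ) (W ∩ U) := by
  obtain ⟨r, hr⟩ := hW
  obtain ⟨s, hs⟩ := hU
  let rU (c : ↥(W ∩ U)) : orbitQuotMap G C ⁻¹' U :=
    ⟨r ⟨c, c.2.1⟩, by rw [Set.mem_preimage, hr]; exact c.2.2⟩
  have hrU : Continuous rU := (r.continuous.comp (by fun_prop)).subtype_mk _
  refine ⟨⟨fun c => orbitQuotMap G A (s (rU c)), by fun_prop⟩, fun c => ?_⟩
  change orbitQuotMap G C (Ψ (s (rU c))) = c
  rw [hs]
  exact hr _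

section Inequalities

variable {G Y Z P : Type*} [Group G] [TopologicalSpace G] [IsTopologicalGroup G]
  [TopologicalSpace Y] [MulAction G Y] [TopologicalSpace Z] [MulAction G Z]
  [TopologicalSpace P] [MulAction G P] [ContinuousSMul G P]

theorem secatf_prodMap_le_secat_inducedQuotMap [ContinuousSMul G Y]
    (h : IsLocallyTrivialPrincipal G P)
    (F : C(Y, Z)) (hF : ∀ (g : G) (y : Y × P),
      F.prodMap (ContinuousMap.id P) (g • y) = g • F.prodMap (ContinuousMap.id P) y) :
    secatf (F.prodMap (ContinuousMap.id P)) (orbitQuotMap G (Z × P)) ≤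
      secat (inducedQuotMap (F.prodMap (ContinuousMap.id P)) hF) :=
  sInf_le_sInf fun _ ⟨m, hm, U, hUo, hUcov, hUs⟩ =>
    ⟨m, hm, U, hUo, hUcov ▸ Set.subset_univ _,
      fun i => h.hasSectionOn_preimage_of_inducedQuotMap F hF (hUs i)⟩

theorem secat_inducedQuotMap_le_add [NormalSpace (Quotient (MulAction.orbitRel G (Z × P)))]
    [ContinuousSMul G Z] (h : IsLocallyTrivialPrincipal G P)
    (F : C(Y, Z)) (hF : ∀ (g : G) (y : Y × P),
      F.prodMap (ContinuousMap.id P) (g • y) = g • F.prodMap (ContinuousMap.id P) y) :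
    secat (inducedQuotMap (F.prodMap (ContinuousMap.id P)) hF) ≤
      secat (orbitQuotMap G P) +
        secatf (F.prodMap (ContinuousMap.id P)) (orbitQuotMap G (Z × P)) := by
  rcases eq_or_ne (secat (orbitQuotMap G P)) ⊤ with hτ | hτ
  · simp [hτ]
  rcases eq_or_ne (secatf (F.prodMap (ContinuousMap.id P)) (orbitQuotMap G (Z × P))) ⊤
    with hρ | hρ
  · simp [hρ]
  obtain ⟨k, hk, V, hVo, hVcov, hVs⟩ := exists_cover_of_secat_ne_top hτ
  obtain ⟨n, hn, U, hUo, hUcov, hUs⟩ := exists_cover_of_secatf_ne_top hρ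
  rw [hk, hn]
  refine secat_le_add_of_inter_covers _ (fun i => orbitQuotSnd G Z P ⁻¹' V i)
    (fun i => (hVo i).preimage (orbitQuotSnd G Z P).continuous)
    (by rw [← Set.preimage_iUnion, hVcov, Set.preimage_univ]) U hUo
    (Set.univ_subset_iff.mp (Set.range_eq_univ.mpr Quotient.mk_surjective ▸ hUcov))
    fun i j => hasSectionOn_inducedQuotMap_inter _ hF (h.hasSectionOn_orbitQuotMap_prod (hVs i))
      (hUs j)

end Inequalities

/-- Let `G` be a topological group acting continuously on `X` and acting
continuously and freely on `P` so that `τ : P → B = P/G` is a locally trivial principal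
`G`-bundle, let `r ≥ 2`, and assume that `(X^r × P)/G` is normal.  For the map
`ρ_r ×_G 1 : (C([0,1],X) × P)/G → (X^r × P)/G` induced on orbit spaces by `ρ_r × id_P`,
one has `TC^w_{r,G}(X;P) ≤ secat[ρ_r ×_G 1] ≤ secat[τ] + TC^w_{r,G}(X;P)`, where
`TC^w_{r,G}(X;P) = secat_Q[ρ_r × id_P]` and `Q : X^r × P → (X^r × P)/G` is the quotient
map. -/
theorem weak_eqTC_rel_le_secat_le_add {G X P : Type*} [Group G] [TopologicalSpace G]
    [IsTopologicalGroup G] [TopologicalSpace X] [MulAction G X] [ContinuousSMul G X]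
    [TopologicalSpace P] [MulAction G P] [ContinuousSMul G P]
    (hloctriv : ∀ b : Quotient (MulAction.orbitRel G P),
      ∃ U : Set (Quotient (MulAction.orbitRel G P)), IsOpen U ∧ b ∈ U ∧
        ∃ φ : (↥U × G) ≃ₜ ↥(⇑(orbitQuotMap G P) ⁻¹' U),
          (∀ (u : ↥U) (g : G), orbitQuotMap G P ((φ (u, g) : P)) = (u : _)) ∧
          ∀ (u : ↥U) (g g' : G), ((φ (u, g' * g) : P)) = g' • ((φ (u, g) : P)))
    {r : ℕ} (t : Fin r → unitInterval)
    [NormalSpace (Quotient (MulAction.orbitRel G ((Fin r → X) × P)))] :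
    secatf ((pathEval X t).prodMap (ContinuousMap.id P))
        (orbitQuotMap G ((Fin r → X) × P)) ≤
      secat (inducedQuotMap (G := G) ((pathEval X t).prodMap (ContinuousMap.id P))
        (fun g z => by
          ext i
          · simp [pathEval]
          · simp)) ∧
    secat (inducedQuotMap (G := G) ((pathEval X t).prodMap (ContinuousMap.id P))
        (fun g z => by
          ext i
          · simp [pathEval]
          · simp)) ≤
      secat (orbitQuotMap G P) +
        secatf ((pathEval X t).prodMap (ContinuousMap.id P))
          (orbitQuotMap G ((Fin r → X) × P)) :=
  ⟨secatf_prodMap_le_secat_inducedQuotMap hloctriv _ _,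
    secat_inducedQuotMap_le_add hloctriv _ _⟩
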